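/- Two distinct involutory automorphisms of a Hamiltonian cycle system of odd order have distinct fixed points; equivalently, an involutory automorphism of an HCS of odd order is uniquely determined by its fixed point. -/

import Mathlib

open Pointwise

variable {V : Type*}

/-- The action of a permutation on a simple graph by relabelling vertices. -/
instance permGraphAction : MulAction (Equiv.Perm V) (SimpleGraph V) where
  smul σ H := H.map σ.toEmbedding
  one_smul H := by
    show H.map (1 : Equiv.Perm V).toEmbedding = H
    ext a b
    simp [SimpleGraph.map_adj]
  mul_smul σ τ H := by
    ext a b
    show (H.map (σ * τ).toEmbedding).Adj a b ↔ ((H.map τ.toEmbedding).map σ.toEmbedding).Adj a b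
    simp only [SimpleGraph.map_adj, Equiv.coe_toEmbedding, Equiv.Perm.coe_mul,
      Function.comp_apply]
    constructor
    · rintro ⟨hab, u, v, h, rfl, rfl⟩
      exact ⟨hab, τ u, τ v, ⟨fun e => hab (by simp [e]), u, v, h, rfl, rfl⟩, rfl, rfl⟩
    · rintro ⟨hab, -, -, ⟨-, u, v, h, rfl, rfl⟩, rfl, rfl⟩
      exact ⟨hab, u, v, h, rfl, rfl⟩

lemma perm_smul_graph (σ : Equiv.Perm V) (H : SimpleGraph V) :
    σ • H = H.map σ.toEmbedding := rfl

/-- A Hamiltonian cycle of the complete graph on `V`: a connected, 2-regular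
(spanning) subgraph. -/
def IsHamCycle [Fintype V] (H : SimpleGraph V) : Prop :=
  H.Connected ∧ ∀ v : V, (H.neighborSet v).ncard = 2

/-- A Hamiltonian cycle system: a set of Hamiltonian cycles whose edge sets
partition the edge set of the complete graph. -/
def IsHCS [Fintype V] (𝓗 : Set (SimpleGraph V)) : Prop :=
  (∀ H ∈ 𝓗, IsHamCycle H) ∧
    ∀ e ∈ (⊤ : SimpleGraph V).edgeSet, ∃! H, H ∈ 𝓗 ∧ e ∈ H.edgeSet

/-- The full automorphism group of a Hamiltonian cycle system, as the subgroup
of vertex permutations preserving the set of cycles. -/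
def autHCS (𝓗 : Set (SimpleGraph V)) : Subgroup (Equiv.Perm V) :=
  MulAction.stabilizer (Equiv.Perm V) 𝓗

/-- The cycle graph traced by a map from `ZMod m` (consecutive residues are adjacent). -/
def cycleOn {W : Type*} (m : ℕ) (f : ZMod m → W) : SimpleGraph W :=
  SimpleGraph.fromRel (fun a b => ∃ i : ZMod m, f i = a ∧ f (i + 1) = b)

/-!
A nontrivial automorphism of an odd cycle that fixes a vertex is the reflection through that
vertex; it fixes no other vertex and flips exactly one edge. An involution `σ` of an HCS on
`2n + 1` points maps the cycle through an edge `{x, σ x}` to itself, so `σ` is a reflection of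
that cycle: it has a unique fixed point `a` and pairs the other `2n` points into `n` edges
`{x, σ x}`. Each of these edges lies on a `σ`-invariant cycle containing no other of them, so
at least `n` of the `n` cycles are invariant, i.e. `σ` fixes every cycle. If `τ` is a second
involution fixing `a`, both are nontrivial automorphisms fixing `a` of a common cycle, and an
automorphism of a cycle is determined by the images of a vertex and of one of its neighbours.
-/

theorem ZMod.add_self_injective {m : ℕ} (hm : Odd m) :
    Function.Injective fun x : ZMod m => x + x := by
  have h2 : IsUnit (2 : ZMod m) := by
    exact_mod_cast (ZMod.isUnit_iff_coprime 2 m).mpr (Nat.coprime_two_left.mpr hm)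
  intro x y hxy
  exact h2.mul_left_cancel (by simpa only [two_mul] using hxy)

namespace SimpleGraph

section Automorphism

variable {H : SimpleGraph V} {π ρ : Equiv.Perm V} {a u v w : V}

theorem perm_smul_adj_apply (π : Equiv.Perm V) (H : SimpleGraph V) (u v : V) :
    (π • H).Adj (π u) (π v) ↔ H.Adj u v :=
  map_adj_apply (f := π.toEmbedding)

theorem adj_apply_iff_of_mem_stabilizer (hπ : π ∈ MulAction.stabilizer (Equiv.Perm V) H) :
    H.Adj (π u) (π v) ↔ H.Adj u v := by
  have := perm_smul_adj_apply π H u v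
  rwa [MulAction.mem_stabilizer_iff.mp hπ] at this

theorem mem_stabilizer_of_adj_apply_iff (h : ∀ u v, H.Adj (π u) (π v) ↔ H.Adj u v) :
    π ∈ MulAction.stabilizer (Equiv.Perm V) H := by
  ext u v
  rw [← π.apply_symm_apply u, ← π.apply_symm_apply v, perm_smul_adj_apply, ← h,
    π.apply_symm_apply, π.apply_symm_apply]

theorem IsCycles.apply_eq_self_of_adj (hH : H.IsCycles)
    (hπ : π ∈ MulAction.stabilizer (Equiv.Perm V) H) (huv : H.Adj u v) (hu : π u = u)
    (hv : π v = v) (huw : H.Adj u w) : π w = w := by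
  by_cases hvw : v = w
  · rwa [← hvw]
  have hπw : H.Adj u (π w) := by rw [← hu]; exact (adj_apply_iff_of_mem_stabilizer hπ).mpr huw
  have hvπw : v ≠ π w := fun h => hvw (π.injective (hv.trans h))
  exact (hH.existsUnique_ne_adj huv).unique ⟨hvπw, hπw⟩ ⟨hvw, huw⟩

theorem IsCycles.eq_one_of_mem_stabilizer (hH : H.IsCycles) (hconn : H.Connected)
    (hπ : π ∈ MulAction.stabilizer (Equiv.Perm V) H) (huv : H.Adj u v) (hu : π u = u)
    (hv : π v = v) : π = 1 := by
  have key : ∀ {x y : V} (p : H.Walk x y) {z : V}, H.Adj x z → π x = x → π z = z → π y = y := by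
    intro x y p
    induction p with
    | nil => exact fun _ hx _ => hx
    | cons hxx' p ih =>
      exact fun hxz hx hz => ih hxx'.symm (hH.apply_eq_self_of_adj hπ hxz hx hz hxx') hx
  ext w
  exact key (hconn.preconnected u w).some huv hu hv

theorem IsCycles.eq_of_mem_stabilizer (hH : H.IsCycles) (hconn : H.Connected)
    (hπ : π ∈ MulAction.stabilizer (Equiv.Perm V) H)
    (hρ : ρ ∈ MulAction.stabilizer (Equiv.Perm V) H)
    (hπ1 : π ≠ 1) (hρ1 : ρ ≠ 1) (hπa : π a = a) (hρa : ρ a = a) : π = ρ := by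
  obtain ⟨x, hx⟩ : ∃ x, π x ≠ x := DFunLike.ne_iff.mp hπ1
  obtain ⟨u, hau⟩ : ∃ u, H.Adj a u := by
    have p := (hconn.preconnected a x).some
    exact ⟨p.snd, p.adj_snd (Walk.not_nil_of_ne fun h => hx (h ▸ hπa))⟩
  -- both `π u` and `ρ u` must be the neighbour of `a` other than `u`
  have hmoved : ∀ {φ : Equiv.Perm V}, φ ∈ MulAction.stabilizer (Equiv.Perm V) H → φ ≠ 1 →
      φ a = a → u ≠ φ u ∧ H.Adj a (φ u) := fun hφ hφ1 hφa =>
    ⟨fun h => hφ1 (hH.eq_one_of_mem_stabilizer hconn hφ hau hφa h.symm),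
      hφa ▸ (adj_apply_iff_of_mem_stabilizer hφ).mpr hau⟩
  have hu : π u = ρ u :=
    (hH.existsUnique_ne_adj hau).unique (hmoved hπ hπ1 hπa) (hmoved hρ hρ1 hρa)
  refine inv_mul_eq_one.mp
    (hH.eq_one_of_mem_stabilizer hconn (mul_mem (inv_mem hπ) hρ) hau ?_ ?_)
  · rw [Equiv.Perm.mul_apply, Equiv.Perm.inv_eq_iff_eq, hρa, hπa]
  · rw [Equiv.Perm.mul_apply, Equiv.Perm.inv_eq_iff_eq, hu]

end Automorphism

section Walk

variable {G : SimpleGraph V} {u : V} {p : G.Walk u u}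

theorem Walk.getVert_val_add_one (p : G.Walk u u) [Fact (1 < p.length)] (i : ZMod p.length) :
    p.getVert (i + 1).val = p.getVert (i.val + 1) := by
  rw [ZMod.val_add, ZMod.val_one]
  obtain h | h : i.val + 1 < p.length ∨ i.val + 1 = p.length := by have := ZMod.val_lt i; omega
  · rw [Nat.mod_eq_of_lt h]
  · rw [h, Nat.mod_self, p.getVert_zero, p.getVert_length]

theorem Walk.IsCycle.injective_getVert_val (hp : p.IsCycle) :
    Function.Injective fun i : ZMod p.length => p.getVert i.val := by
  have : NeZero p.length := ⟨by have := hp.three_le_length; omega⟩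
  refine fun i j h => ZMod.val_injective _ (hp.getVert_injOn' ?_ ?_ h)
  · have := ZMod.val_lt i; simp only [Set.mem_ofPred_eq]; omega
  · have := ZMod.val_lt j; simp only [Set.mem_ofPred_eq]; omega

theorem Walk.surjective_getVert_val (hsupp : ∀ w, w ∈ p.support) :
    Function.Surjective fun i : ZMod p.length => p.getVert i.val := by
  intro w
  obtain ⟨k, rfl, hk⟩ := Walk.mem_support_iff_exists_getVert.mp (hsupp w)
  rcases hk.lt_or_eq with hk | rfl
  · exact ⟨k, by simp only [ZMod.val_cast_of_lt hk]⟩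
  · exact ⟨0, by simp only [ZMod.val_zero, p.getVert_zero, p.getVert_length]⟩

theorem Walk.IsCycle.adj_getVert_val_iff [G.LocallyFinite] (hp : p.IsCycle) (hG : G.IsCycles)
    (i j : ZMod p.length) :
    G.Adj (p.getVert i.val) (p.getVert j.val) ↔ j = i + 1 ∨ i = j + 1 := by
  have : Fact (1 < p.length) := ⟨by have := hp.three_le_length; omega⟩
  have hinj := hp.injective_getVert_val
  constructor
  · intro hij
    obtain ⟨k, hk, hkL⟩ := p.toSubgraph_adj_iff.mp <| (hp.adj_toSubgraph_iff_of_isCycles hG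
      (p.mem_verts_toSubgraph.mpr (p.getVert_mem_support _)) _).mpr hij
    have hk0 : p.getVert k = p.getVert (k : ZMod p.length).val := by
      rw [ZMod.val_cast_of_lt hkL]
    have hk1 : p.getVert (k + 1) = p.getVert ((k : ZMod p.length) + 1).val := by
      rw [p.getVert_val_add_one, ZMod.val_cast_of_lt hkL]
    rw [hk0, hk1, Sym2.eq_iff] at hk
    rcases hk with ⟨h1, h2⟩ | ⟨h1, h2⟩
    · exact Or.inl (by rw [← hinj h1, ← hinj h2])
    · exact Or.inr (by rw [← hinj h1, ← hinj h2])
  · rintro (rfl | rfl)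
    · rw [p.getVert_val_add_one]
      exact p.adj_getVert_succ (ZMod.val_lt i)
    · rw [p.getVert_val_add_one]
      exact (p.adj_getVert_succ (ZMod.val_lt j)).symm

end Walk

section Reflection

variable {H : SimpleGraph V} {m : ℕ} {g : ZMod m ≃ V}

def cycleReflection (g : ZMod m ≃ V) (z : ZMod m) : Equiv.Perm V :=
  (g.symm.trans (Equiv.subLeft (z + z))).trans g

theorem cycleReflection_apply (g : ZMod m ≃ V) (z i : ZMod m) :
    cycleReflection g z (g i) = g (z + z - i) := by
  simp [cycleReflection]

theorem cycleReflection_apply_eq_self_iff (hm : Odd m) (g : ZMod m ≃ V) (z : ZMod m) {v : V} :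
    cycleReflection g z v = v ↔ v = g z := by
  rw [← g.apply_symm_apply v, cycleReflection_apply, g.injective.eq_iff, g.injective.eq_iff]
  exact ⟨fun h => ZMod.add_self_injective hm (by linear_combination -h), fun h => by rw [h]; ring⟩

theorem cycleReflection_mem_stabilizer (hg : ∀ i j, H.Adj (g i) (g j) ↔ j = i + 1 ∨ i = j + 1)
    (z : ZMod m) : cycleReflection g z ∈ MulAction.stabilizer (Equiv.Perm V) H := by
  refine mem_stabilizer_of_adj_apply_iff fun u v => ?_
  rw [← g.apply_symm_apply u, ← g.apply_symm_apply v, cycleReflection_apply,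
    cycleReflection_apply, hg, hg, or_comm]
  constructor <;> rintro (h | h) <;> [left; right; left; right] <;> linear_combination h

end Reflection

end SimpleGraph

open SimpleGraph

section HamiltonianCycle

variable [Fintype V] {H : SimpleGraph V} {π : Equiv.Perm V} {a : V}

theorem IsHamCycle.isCycles (hH : IsHamCycle H) : H.IsCycles := fun v _ => hH.2 v

theorem IsHamCycle.exists_zmod_equiv (hH : IsHamCycle H) :
    ∃ g : ZMod (Fintype.card V) ≃ V, ∀ i j, H.Adj (g i) (g j) ↔ j = i + 1 ∨ i = j + 1 := by
  classical
  obtain ⟨v⟩ := hH.1.nonempty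
  obtain ⟨p, hp, hverts⟩ := hH.isCycles.exists_cycle_toSubgraph_verts_eq_connectedComponentSupp
    (c := H.connectedComponentMk v) rfl (Set.nonempty_of_ncard_ne_zero (by simp [hH.2]))
  have hsupp : ∀ w, w ∈ p.support := fun w => by
    rw [← p.mem_verts_toSubgraph, hverts, ConnectedComponent.mem_supp_iff,
      ConnectedComponent.eq]
    exact hH.1.preconnected w v
  have : NeZero p.length := ⟨by have := hp.three_le_length; omega⟩
  let e := Equiv.ofBijective _ ⟨hp.injective_getVert_val, p.surjective_getVert_val hsupp⟩
  have hcard : Fintype.card V = p.length := by rw [← Fintype.card_congr e, ZMod.card]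
  rw [hcard]
  exact ⟨e, hp.adj_getVert_val_iff hH.isCycles⟩

theorem IsHamCycle.eq_cycleReflection (hH : IsHamCycle H) (hodd : Odd (Fintype.card V))
    {g : ZMod (Fintype.card V) ≃ V} (hg : ∀ i j, H.Adj (g i) (g j) ↔ j = i + 1 ∨ i = j + 1)
    (hπ : π ∈ MulAction.stabilizer (Equiv.Perm V) H) (hπ1 : π ≠ 1) (ha : π a = a) :
    π = cycleReflection g (g.symm a) := by
  refine hH.isCycles.eq_of_mem_stabilizer hH.1 hπ (cycleReflection_mem_stabilizer hg _) hπ1 ?_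
    ha ((cycleReflection_apply_eq_self_iff hodd g _).mpr (g.apply_symm_apply a).symm)
  intro h1
  have hall : ∀ v, v = a := fun v => by
    simpa using (cycleReflection_apply_eq_self_iff hodd g (g.symm a)).mp (by rw [h1]; rfl)
  exact hπ1 (Equiv.ext fun v => by rw [hall v, ha, hall a]; rfl)

theorem IsHamCycle.eq_of_apply_eq_self (hH : IsHamCycle H) (hodd : Odd (Fintype.card V))
    (hπ : π ∈ MulAction.stabilizer (Equiv.Perm V) H) (hπ1 : π ≠ 1) (ha : π a = a) {b : V}
    (hb : π b = b) : b = a := by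
  obtain ⟨g, hg⟩ := hH.exists_zmod_equiv
  rw [hH.eq_cycleReflection hodd hg hπ hπ1 ha, cycleReflection_apply_eq_self_iff hodd] at hb
  rwa [g.apply_symm_apply] at hb

theorem IsHamCycle.ncard_adj_apply_le (hH : IsHamCycle H) (hodd : Odd (Fintype.card V))
    (hπ : π ∈ MulAction.stabilizer (Equiv.Perm V) H) (hπ1 : π ≠ 1) (ha : π a = a) :
    {x | H.Adj x (π x)}.ncard ≤ 2 := by
  obtain ⟨g, hg⟩ := hH.exists_zmod_equiv
  set z := g.symm a
  rw [hH.eq_cycleReflection hodd hg hπ hπ1 ha]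
  calc {x | H.Adj x (cycleReflection g z x)}.ncard
      ≤ ({z + z - 1, z + z + 1} : Set (ZMod (Fintype.card V))).ncard := by
        refine Set.ncard_le_ncard_of_injOn (fun x => g.symm x + g.symm x) (fun x hx => ?_)
          (fun x _ y _ h => g.symm.injective (ZMod.add_self_injective hodd h))
        rw [Set.mem_ofPred_eq, ← g.apply_symm_apply x, cycleReflection_apply, hg] at hx
        rcases hx with h | h
        · exact Or.inl (by linear_combination -h)
        · exact Or.inr (Set.mem_singleton_iff.mpr (by linear_combination h))
    _ ≤ 2 := (Set.ncard_insert_le _ _).trans (by rw [Set.ncard_singleton])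

end HamiltonianCycle

section HamiltonianCycleSystem

variable [Fintype V] {𝓗 : Set (SimpleGraph V)} {π : Equiv.Perm V} {G : SimpleGraph V}
  {a x y : V}

theorem IsHCS.existsUnique_adj (h : IsHCS 𝓗) (hxy : x ≠ y) : ∃! G, G ∈ 𝓗 ∧ G.Adj x y :=
  h.2 s(x, y) hxy

theorem IsHCS.mem_stabilizer_of_adj_apply (h : IsHCS 𝓗) (hπ : π ∈ autHCS 𝓗)
    (hinv : Function.Involutive π) (hG : G ∈ 𝓗) (hx : G.Adj x (π x)) :
    π ∈ MulAction.stabilizer (Equiv.Perm V) G := by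
  have hπG : π • G ∈ 𝓗 := MulAction.mem_stabilizer_iff.mp hπ ▸ Set.smul_mem_smul_set hG
  have hπx : (π • G).Adj (π x) x := by
    simpa only [hinv x] using (perm_smul_adj_apply π G x (π x)).mpr hx
  exact (h.existsUnique_adj hx.ne).unique ⟨hπG, hπx.symm⟩ ⟨hG, hx⟩

theorem IsHCS.ncard_eq (h : IsHCS 𝓗) {n : ℕ} (hV : Fintype.card V = 2 * n + 1) :
    𝓗.ncard = n := by
  classical
  obtain ⟨a⟩ : Nonempty V := Fintype.card_pos_iff.mp (by omega)
  have hcount := Finset.card_mul_eq_card_mul (fun x (G : SimpleGraph V) => G.Adj a x)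
    (s := Finset.univ.erase a) (t := (Set.toFinite 𝓗).toFinset) (m := 1) (n := 2)
    (fun x hx => by
      obtain ⟨G, hG, hGu⟩ := h.existsUnique_adj (Finset.ne_of_mem_erase hx).symm
      refine Finset.card_eq_one.mpr ⟨G, Finset.ext fun G' => ?_⟩
      simp only [Finset.mem_bipartiteAbove, Set.Finite.mem_toFinset, Finset.mem_singleton]
      exact ⟨hGu G', fun e => e ▸ hG⟩)
    (fun G hG => by
      have hs : (Finset.univ.erase a).bipartiteBelow (fun x G => G.Adj a x) G
          = (G.neighborSet a).toFinset := by
        ext x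
        simp only [Finset.mem_bipartiteBelow, Finset.mem_erase, Finset.mem_univ, and_true,
          Set.mem_toFinset, mem_neighborSet, and_iff_right_iff_imp]
        exact fun hax => hax.ne.symm
      rw [hs, ← Set.ncard_eq_toFinset_card', (h.1 G ((Set.toFinite 𝓗).mem_toFinset.mp hG)).2 a])
  rw [Finset.card_erase_of_mem (Finset.mem_univ a), Finset.card_univ, hV] at hcount
  rw [Set.ncard_eq_toFinset_card 𝓗]
  omega

theorem IsHCS.eq_of_apply_eq_self (h : IsHCS 𝓗) (hodd : Odd (Fintype.card V))
    (hπ : π ∈ autHCS 𝓗) (hinv : Function.Involutive π) (hπ1 : π ≠ 1) (ha : π a = a)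
    (hx : π x = x) : x = a := by
  obtain ⟨y, hy⟩ : ∃ y, π y ≠ y := DFunLike.ne_iff.mp hπ1
  obtain ⟨G, ⟨hG, hGy⟩, -⟩ := h.existsUnique_adj hy.symm
  exact (h.1 G hG).eq_of_apply_eq_self hodd (h.mem_stabilizer_of_adj_apply hπ hinv hG hGy) hπ1
    ha hx

theorem IsHCS.mem_stabilizer_of_involutive (h : IsHCS 𝓗) {n : ℕ} (hV : Fintype.card V = 2 * n + 1)
    (hπ : π ∈ autHCS 𝓗) (hinv : Function.Involutive π) (hπ1 : π ≠ 1) (ha : π a = a)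
    (hG : G ∈ 𝓗) : π ∈ MulAction.stabilizer (Equiv.Perm V) G := by
  classical
  have hodd : Odd (Fintype.card V) := hV ▸ odd_two_mul_add_one n
  set T := (Set.toFinite 𝓗).toFinset
  set F := T.filter fun G => π ∈ MulAction.stabilizer (Equiv.Perm V) G
  have hcount := Finset.card_mul_le_card_mul (fun x (G : SimpleGraph V) => G.Adj x (π x))
    (s := Finset.univ.erase a) (t := F) (m := 1) (n := 2)
    (fun x hx => by
      have hxπ : π x ≠ x := fun e =>
        Finset.ne_of_mem_erase hx (h.eq_of_apply_eq_self hodd hπ hinv hπ1 ha e)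
      obtain ⟨G, ⟨hG, hGx⟩, -⟩ := h.existsUnique_adj hxπ.symm
      exact Finset.one_le_card.mpr ⟨G, Finset.mem_filter.mpr ⟨Finset.mem_filter.mpr
        ⟨(Set.toFinite 𝓗).mem_toFinset.mpr hG, h.mem_stabilizer_of_adj_apply hπ hinv hG hGx⟩,
        hGx⟩⟩)
    (fun G hG => by
      obtain ⟨hGT, hGπ⟩ := Finset.mem_filter.mp hG
      rw [← Set.ncard_coe_finset]
      exact (Set.ncard_le_ncard fun x hx => (Finset.mem_filter.mp hx).2).trans
        ((h.1 G ((Set.toFinite 𝓗).mem_toFinset.mp hGT)).ncard_adj_apply_le hodd hGπ hπ1 ha))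
  have hT : T.card = n := by rw [← Set.ncard_eq_toFinset_card, h.ncard_eq hV]
  rw [Finset.card_erase_of_mem (Finset.mem_univ a), Finset.card_univ, hV] at hcount
  have hFT : F = T := Finset.eq_of_subset_of_card_le (Finset.filter_subset _ _) (by omega)
  have hGF : G ∈ F := hFT ▸ (Set.toFinite 𝓗).mem_toFinset.mpr hG
  exact (Finset.mem_filter.mp hGF).2

end HamiltonianCycleSystem

/-- two involutory automorphisms of an HCS of odd order with a common fixed
point coincide (so distinct involutions have distinct fixed points). -/
theorem involutions_distinct_fixed_points [Fintype V] (n : ℕ)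
    (hV : Fintype.card V = 2 * n + 1)
    (𝓗 : Set (SimpleGraph V)) (h : IsHCS 𝓗) (σ τ : Equiv.Perm V)
    (hσm : σ ∈ autHCS 𝓗) (hτm : τ ∈ autHCS 𝓗)
    (hσ : orderOf σ = 2) (hτ : orderOf τ = 2)
    (a : V) (ha : σ a = a) (hb : τ a = a) : σ = τ := by
  have hinv : ∀ {π : Equiv.Perm V}, orderOf π = 2 → Function.Involutive π := fun hπ x => by
    rw [← Equiv.Perm.mul_apply, ← sq, ← hπ, pow_orderOf_eq_one, Equiv.Perm.one_apply]
  have hne : ∀ {π : Equiv.Perm V}, orderOf π = 2 → π ≠ 1 := fun hπ h1 => by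
    simp [h1] at hπ
  obtain ⟨x, hx⟩ : ∃ x, σ x ≠ x := DFunLike.ne_iff.mp (hne hσ)
  obtain ⟨G, ⟨hG, hGx⟩, -⟩ := h.existsUnique_adj hx.symm
  have hσG := h.mem_stabilizer_of_adj_apply hσm (hinv hσ) hG hGx
  have hτG := h.mem_stabilizer_of_involutive hV hτm (hinv hτ) (hne hτ) hb hG
  exact (h.1 G hG).isCycles.eq_of_mem_stabilizer (h.1 G hG).1 hσG hτG (hne hσ) (hne hτ) ha hb
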